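/- For every k ≥ 2 and every surjective colouring Δ : ℕ^(2) ↠ [k], one has |F_Δ| ≥ 1 + log₂ k; equivalently, 2^(|F_Δ| − 1) ≥ k. In particular ψ(k) ≥ 1 + log₂ k. -/

import Mathlib

/-- The colour of the unordered edge `{x, y}` (only values on distinct pairs matter). -/
def edgeCol (Δ : ℕ → ℕ → ℕ) (x y : ℕ) : ℕ := Δ (min x y) (max x y)

/-- `colourSet Δ X` is the set of colours attained by `Δ` on edges with both endpoints in `X`. -/
def colourSet (Δ : ℕ → ℕ → ℕ) (X : Set ℕ) : Set ℕ :=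
  {c | ∃ x ∈ X, ∃ y ∈ X, x ≠ y ∧ edgeCol Δ x y = c}

/-- `Δ` is a surjective colouring `ℕ^(2) ↠ [k]` of the edges of the complete
graph on `ℕ` with colour set `[k] = {1, …, k}`. -/
def IsColouring (Δ : ℕ → ℕ → ℕ) (k : ℕ) : Prop :=
  (∀ x y : ℕ, x ≠ y → edgeCol Δ x y ∈ Finset.Icc 1 k) ∧
  (∀ c ∈ Finset.Icc 1 k, ∃ x y : ℕ, x ≠ y ∧ edgeCol Δ x y = c)

/-- `F_Δ`: the set of `m ∈ [k]` for which some infinite `X ⊆ ℕ` is exactly `m`-coloured. -/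
def FSet (Δ : ℕ → ℕ → ℕ) (k : ℕ) : Set ℕ :=
  {m | m ∈ Finset.Icc 1 k ∧ ∃ X : Set ℕ, X.Infinite ∧ (colourSet Δ X).ncard = m}

/-- `ψ k`: the minimum of `|F_Δ|` over all surjective colourings `Δ : ℕ^(2) ↠ [k]`. -/
noncomputable def psi (k : ℕ) : ℕ :=
  sInf {m | ∃ Δ : ℕ → ℕ → ℕ, IsColouring Δ k ∧ (FSet Δ k).ncard = m}

/-!
Every `b ∈ F_Δ` with `b ≥ 2` has a companion `s ∈ F_Δ` with `b ≤ 2 s < 2 b`; descending from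
`k ∈ F_Δ` in at least-halving steps down to `1` visits `1 + log₂ k` distinct elements of `F_Δ`.

To find `s`, let `X` be infinite and exactly `b`-coloured. Pick a finite `W ⊆ X` whose edges
already show all `b` colours, and (by pigeonhole and Ramsey) an infinite monochromatic
`M ⊆ X \ W` to which every `w ∈ W` sends a single colour. Shrink `W` to a minimal `W'` with
`M ∪ W'` still `b`-coloured. If `|W'| ≤ 1` then `b = 2` and `s = 1` is realised by `M`.
Otherwise, for distinct `w₁, w₂ ∈ W'`, each colour of `M ∪ W'` survives deleting `w₁` or
deleting `w₂`, except possibly that of `w₁w₂`, whereas the colour of `M` survives both; so the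
two deletions keep `s₁ + s₂ ≥ b` colours, and by minimality `s₁, s₂ < b`.
-/

open Set

theorem Set.Infinite.exists_infinite_fiber_of_mapsTo {α β : Type*} {s : Set α} {t : Set β}
    {f : α → β} (hs : s.Infinite) (hf : MapsTo f s t) (ht : t.Finite) :
    ∃ y ∈ t, {x ∈ s | f x = y}.Infinite := by
  by_contra! h
  refine hs ((ht.biUnion h).subset fun x hx => ?_)
  exact mem_biUnion (hf hx) ⟨hx, rfl⟩

theorem le_two_pow_ncard_inter_Iic_sub_one {F : Set ℕ}
    (hstep : ∀ b ∈ F, 2 ≤ b → ∃ s ∈ F, s < b ∧ b ≤ 2 * s) :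
    ∀ b ∈ F, b ≤ 2 ^ ((F ∩ Iic b).ncard - 1) := by
  intro b
  induction b using Nat.strong_induction_on with
  | _ b ih =>
  intro hb
  rcases Nat.lt_or_ge b 2 with hb2 | hb2
  · have := Nat.one_le_two_pow (n := (F ∩ Iic b).ncard - 1)
    omega
  obtain ⟨s, hs, hsb, hbs⟩ := hstep b hb hb2
  have hlt : (F ∩ Iic s).ncard < (F ∩ Iic b).ncard := by
    refine ncard_lt_ncard ?_ ((finite_Iic b).inter_of_right F)
    refine ssubset_of_subset_of_ne
      (inter_subset_inter_right F (Iic_subset_Iic.2 hsb.le)) fun h => ?_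
    have : b ∈ F ∩ Iic s := h ▸ ⟨hb, mem_Iic.2 le_rfl⟩
    exact absurd this.2 (not_le.2 hsb)
  have hpos : 0 < (F ∩ Iic s).ncard :=
    (ncard_pos ((finite_Iic s).inter_of_right F)).2 ⟨s, hs, mem_Iic.2 le_rfl⟩
  calc b ≤ 2 * s := hbs
    _ ≤ 2 * 2 ^ ((F ∩ Iic s).ncard - 1) := by gcongr; exact ih s hsb hs
    _ = 2 ^ (F ∩ Iic s).ncard := by rw [← pow_succ']; congr 1; omega
    _ ≤ 2 ^ ((F ∩ Iic b).ncard - 1) := Nat.pow_le_pow_right two_pos (by omega)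

theorem le_two_pow_ncard_sub_one {F : Set ℕ} (hF : F.Finite)
    (hstep : ∀ b ∈ F, 2 ≤ b → ∃ s ∈ F, s < b ∧ b ≤ 2 * s) {b : ℕ} (hb : b ∈ F) :
    b ≤ 2 ^ (F.ncard - 1) :=
  (le_two_pow_ncard_inter_Iic_sub_one hstep b hb).trans <|
    Nat.pow_le_pow_right two_pos (Nat.sub_le_sub_right (ncard_le_ncard inter_subset_left hF) 1)

theorem edgeCol_comm (Δ : ℕ → ℕ → ℕ) (x y : ℕ) : edgeCol Δ x y = edgeCol Δ y x := by
  rw [edgeCol, edgeCol, min_comm, max_comm]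

variable {Δ : ℕ → ℕ → ℕ} {k : ℕ}

theorem colourSet_mono {X Y : Set ℕ} (h : X ⊆ Y) : colourSet Δ X ⊆ colourSet Δ Y := by
  rintro c ⟨x, hx, y, hy, hxy, rfl⟩
  exact ⟨x, h hx, y, h hy, hxy, rfl⟩

theorem colourSet_nonempty {X : Set ℕ} (hX : X.Infinite) : (colourSet Δ X).Nonempty := by
  obtain ⟨x, hx⟩ := hX.nonempty
  obtain ⟨y, hy, hyx⟩ := (hX.sdiff (finite_singleton x)).nonempty
  exact ⟨_, x, hx, y, hy, Ne.symm hyx, rfl⟩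

theorem colourSet_insert_subset {M : Set ℕ} {w c : ℕ}
    (h : ∀ m ∈ M, m ≠ w → edgeCol Δ w m = c) :
    colourSet Δ (insert w M) ⊆ insert c (colourSet Δ M) := by
  rintro _ ⟨x, hx, y, hy, hxy, rfl⟩
  rcases hx with rfl | hx
  · exact Or.inl (h y (hy.resolve_left (Ne.symm hxy)) (Ne.symm hxy))
  rcases hy with rfl | hy
  · exact Or.inl (by rw [edgeCol_comm]; exact h x hx hxy)
  exact Or.inr ⟨x, hx, y, hy, hxy, rfl⟩

theorem exists_finset_colourSet_eq {X : Set ℕ} (hX : (colourSet Δ X).Finite) :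
    ∃ W : Finset ℕ, ↑W ⊆ X ∧ colourSet Δ W = colourSet Δ X := by
  choose! p hp q hq hpq hpqc using fun c (hc : c ∈ colourSet Δ X) => hc
  set W := hX.toFinset.image p ∪ hX.toFinset.image q
  have hWX : ↑W ⊆ X := by
    intro x hx
    simp only [W, Finset.coe_union, Finset.coe_image, Finite.coe_toFinset] at hx
    rcases hx with ⟨c, hc, rfl⟩ | ⟨c, hc, rfl⟩
    exacts [hp c hc, hq c hc]
  refine ⟨W, hWX, (colourSet_mono hWX).antisymm fun c hc =>
    ⟨p c, ?_, q c, ?_, hpq c hc, hpqc c hc⟩⟩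
  · simpa [W] using Or.inl ⟨c, hc, rfl⟩
  · simpa [W] using Or.inr ⟨c, hc, rfl⟩

theorem exists_infinite_subset_edgeCol_const {X : Set ℕ} (hX : X.Infinite)
    (hfin : (colourSet Δ X).Finite) (W : Finset ℕ) (hW : ↑W ⊆ X) :
    ∃ M ⊆ X \ W, M.Infinite ∧
      ∀ w ∈ W, ∀ m ∈ M, ∀ m' ∈ M, edgeCol Δ w m = edgeCol Δ w m' := by
  have hmaps : MapsTo (fun m (w : W) => edgeCol Δ w m) (X \ W)
      (univ.pi fun _ => colourSet Δ X) := fun m hm w _ =>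
    ⟨w, hW w.2, m, hm.1, fun h => hm.2 (h ▸ w.2), rfl⟩
  obtain ⟨y, -, hy⟩ :=
    (hX.sdiff W.finite_toSet).exists_infinite_fiber_of_mapsTo hmaps (Finite.pi fun _ => hfin)
  refine ⟨_, fun m hm => hm.1, hy, fun w hw m hm m' hm' => ?_⟩
  exact (congrFun hm.2 ⟨w, hw⟩).trans (congrFun hm'.2 ⟨w, hw⟩).symm

/-- Infinite Ramsey theorem for pairs. -/
theorem exists_infinite_subset_colourSet_subset_singleton {X : Set ℕ} (hX : X.Infinite)
    (hfin : (colourSet Δ X).Finite) :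
    ∃ M ⊆ X, M.Infinite ∧ ∃ γ, colourSet Δ M ⊆ {γ} := by
  have step : ∀ A : {A : Set ℕ // A ⊆ X ∧ A.Infinite}, ∃ B : {B : Set ℕ // B ⊆ X ∧ B.Infinite},
      B.1 ⊆ A.1 \ {sInf A.1} ∧
        ∀ y ∈ B.1, ∀ z ∈ B.1, edgeCol Δ (sInf A.1) y = edgeCol Δ (sInf A.1) z := by
    rintro ⟨A, hAX, hA⟩
    obtain ⟨B, hBA, hB, hconst⟩ := exists_infinite_subset_edgeCol_const hA
      (hfin.subset (colourSet_mono hAX)) {sInf A} (by simpa using Nat.sInf_mem hA.nonempty)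
    exact ⟨⟨B, fun y hy => hAX (hBA hy).1, hB⟩, by simpa using hBA,
      hconst _ (Finset.mem_singleton_self _)⟩
  -- `x n` is the least element of `A n`, and `A (n + 1)` sees `x n` in a single colour, so the
  -- colour of `x i x j` depends only on `min i j`; pigeonhole on that colour finishes.
  choose next hnext_sub hnext_const using step
  let A : ℕ → {A : Set ℕ // A ⊆ X ∧ A.Infinite} := fun n => next^[n] ⟨X, subset_rfl, hX⟩
  let x : ℕ → ℕ := fun n => sInf (A n).1
  have hA_succ : ∀ n, A (n + 1) = next (A n) := fun n => Function.iterate_succ_apply' _ _ _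
  have hA_anti : Antitone fun n => (A n).1 := antitone_nat_of_succ_le fun n => by
    rw [hA_succ]; exact (hnext_sub _).trans sdiff_subset
  have hx_mem : ∀ n, x n ∈ (A n).1 := fun n => Nat.sInf_mem (A n).2.2.nonempty
  have hx_mem_succ : ∀ i j, i < j → x j ∈ (next (A i)).1 := fun i j hij => by
    rw [← hA_succ]; exact hA_anti hij (hx_mem j)
  have hx_mono : StrictMono x := fun i j hij => by
    have hj := hnext_sub _ (hx_mem_succ i j hij)
    exact (Nat.sInf_le hj.1).lt_of_ne (Ne.symm hj.2)
  have hx_col : ∀ i j, i < j → edgeCol Δ (x i) (x j) = edgeCol Δ (x i) (x (i + 1)) :=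
    fun i j hij => hnext_const _ _ (hx_mem_succ i j hij) _ (hx_mem_succ i _ i.lt_succ_self)
  have hmaps : MapsTo (fun i => edgeCol Δ (x i) (x (i + 1))) univ (colourSet Δ X) :=
    fun i _ => ⟨_, (A i).2.1 (hx_mem i), _, (A (i + 1)).2.1 (hx_mem _),
      (hx_mono i.lt_succ_self).ne, rfl⟩
  obtain ⟨γ, -, hI⟩ := infinite_univ.exists_infinite_fiber_of_mapsTo hmaps hfin
  refine ⟨x '' _, ?_, hI.image hx_mono.injective.injOn, γ, ?_⟩
  · rintro _ ⟨n, -, rfl⟩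
    exact (A n).2.1 (hx_mem n)
  · rintro _ ⟨_, ⟨i, hi, rfl⟩, _, ⟨j, hj, rfl⟩, hne, rfl⟩
    rcases lt_or_gt_of_ne (hx_mono.injective.ne_iff.1 hne) with hij | hij
    · exact (hx_col i j hij).trans hi.2
    · rw [edgeCol_comm]; exact (hx_col j i hij).trans hj.2

theorem ncard_colourSet_union_le_add {A : Set ℕ} (hA : (colourSet Δ A).Nonempty)
    {W : Finset ℕ} (hfin : (colourSet Δ (A ∪ W)).Finite) {w₁ w₂ : ℕ} (hne : w₁ ≠ w₂) :
    (colourSet Δ (A ∪ W)).ncard ≤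
      (colourSet Δ (A ∪ ↑(W.erase w₁))).ncard + (colourSet Δ (A ∪ ↑(W.erase w₂))).ncard := by
  set T₁ := colourSet Δ (A ∪ ↑(W.erase w₁))
  set T₂ := colourSet Δ (A ∪ ↑(W.erase w₂))
  have hsub_erase : ∀ w, A ∪ ↑(W.erase w) ⊆ A ∪ W := fun w =>
    union_subset_union_right A (Finset.coe_subset.2 (W.erase_subset w))
  have hmem_erase : ∀ {x w}, x ∈ A ∪ ↑W → x ≠ w → x ∈ A ∪ ↑(W.erase w) := by
    intro x w hx hxw
    simp only [mem_union, Finset.coe_erase, mem_sdiff, mem_singleton_iff] at hx ⊢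
    tauto
  have hT₁ : T₁.Finite := hfin.subset (colourSet_mono (hsub_erase w₁))
  have hT₂ : T₂.Finite := hfin.subset (colourSet_mono (hsub_erase w₂))
  have hsub : colourSet Δ (A ∪ W) ⊆ insert (edgeCol Δ w₁ w₂) (T₁ ∪ T₂) := by
    rintro _ ⟨x, hx, y, hy, hxy, rfl⟩
    by_cases h₁ : x ≠ w₁ ∧ y ≠ w₁
    · exact Or.inr (Or.inl ⟨x, hmem_erase hx h₁.1, y, hmem_erase hy h₁.2, hxy, rfl⟩)
    by_cases h₂ : x ≠ w₂ ∧ y ≠ w₂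
    · exact Or.inr (Or.inr ⟨x, hmem_erase hx h₂.1, y, hmem_erase hy h₂.2, hxy, rfl⟩)
    obtain ⟨rfl, rfl⟩ | ⟨rfl, rfl⟩ : (x = w₁ ∧ y = w₂) ∨ (x = w₂ ∧ y = w₁) := by omega
    exacts [Or.inl rfl, Or.inl (edgeCol_comm Δ _ _)]
  have hinter : 0 < (T₁ ∩ T₂).ncard := (ncard_pos (hT₁.inter_of_left T₂)).2 <|
    hA.mono (subset_inter (colourSet_mono subset_union_left) (colourSet_mono subset_union_left))
  have hunion := ncard_union_add_ncard_inter T₁ T₂ hT₁ hT₂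
  calc (colourSet Δ (A ∪ W)).ncard ≤ (insert (edgeCol Δ w₁ w₂) (T₁ ∪ T₂)).ncard :=
        ncard_le_ncard hsub ((hT₁.union hT₂).insert _)
    _ ≤ (T₁ ∪ T₂).ncard + 1 := ncard_insert_le _ _
    _ ≤ T₁.ncard + T₂.ncard := by omega

theorem colourSet_subset_Icc (hΔ : IsColouring Δ k) (X : Set ℕ) :
    colourSet Δ X ⊆ ↑(Finset.Icc 1 k) := by
  rintro c ⟨x, -, y, -, hxy, rfl⟩
  exact hΔ.1 x y hxy

theorem colourSet_finite (hΔ : IsColouring Δ k) (X : Set ℕ) : (colourSet Δ X).Finite :=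
  (Finset.Icc 1 k).finite_toSet.subset (colourSet_subset_Icc hΔ X)

theorem FSet_finite : (FSet Δ k).Finite :=
  (Finset.Icc 1 k).finite_toSet.subset fun _ hm => hm.1

theorem ncard_colourSet_mem_FSet (hΔ : IsColouring Δ k) {X : Set ℕ} (hX : X.Infinite) :
    (colourSet Δ X).ncard ∈ FSet Δ k := by
  refine ⟨Finset.mem_Icc.2 ⟨?_, ?_⟩, X, hX, rfl⟩
  · exact (ncard_pos (colourSet_finite hΔ X)).2 (colourSet_nonempty hX)
  · simpa using ncard_le_ncard (colourSet_subset_Icc hΔ X)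

theorem self_mem_FSet (hΔ : IsColouring Δ k) : k ∈ FSet Δ k := by
  have huniv : colourSet Δ univ = ↑(Finset.Icc 1 k) := by
    refine (colourSet_subset_Icc hΔ _).antisymm fun c hc => ?_
    obtain ⟨x, y, hxy, rfl⟩ := hΔ.2 c hc
    exact ⟨x, trivial, y, trivial, hxy, rfl⟩
  simpa [huniv] using ncard_colourSet_mem_FSet hΔ infinite_univ

theorem exists_monochromatic_union_finset_colourSet_eq {X : Set ℕ} (hX : X.Infinite)
    (hfin : (colourSet Δ X).Finite) :
    ∃ M ⊆ X, M.Infinite ∧ (∃ γ, colourSet Δ M ⊆ {γ}) ∧ ∃ W : Finset ℕ, ↑W ⊆ X ∧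
      (∀ w ∈ W, ∀ m ∈ M, ∀ m' ∈ M, edgeCol Δ w m = edgeCol Δ w m') ∧
      colourSet Δ (M ∪ W) = colourSet Δ X := by
  obtain ⟨W, hWX, hWT⟩ := exists_finset_colourSet_eq hfin
  obtain ⟨M₁, hM₁, hM₁inf, hconst⟩ := exists_infinite_subset_edgeCol_const hX hfin W hWX
  have hM₁X : M₁ ⊆ X := hM₁.trans sdiff_subset
  obtain ⟨M, hMM₁, hM, hγ⟩ := exists_infinite_subset_colourSet_subset_singleton hM₁inf
    (hfin.subset (colourSet_mono hM₁X))
  refine ⟨M, hMM₁.trans hM₁X, hM, hγ, W, hWX,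
    fun w hw m hm m' hm' => hconst w hw m (hMM₁ hm) m' (hMM₁ hm'), ?_⟩
  refine (colourSet_mono (union_subset (hMM₁.trans hM₁X) hWX)).antisymm ?_
  exact hWT ▸ colourSet_mono subset_union_right

theorem ncard_colourSet_union_le_two {M : Set ℕ} (hM : M.Nonempty) {γ : ℕ}
    (hγ : colourSet Δ M ⊆ {γ}) {W : Finset ℕ} (hW : W.card ≤ 1)
    (hconst : ∀ w ∈ W, ∀ m ∈ M, ∀ m' ∈ M, edgeCol Δ w m = edgeCol Δ w m') :
    (colourSet Δ (M ∪ W)).ncard ≤ 2 := by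
  obtain ⟨m, hm⟩ := hM
  obtain rfl | ⟨w, hw⟩ := W.eq_empty_or_nonempty
  · simpa using (ncard_le_ncard hγ).trans (by simp : ({γ} : Set ℕ).ncard ≤ 2)
  rw [Finset.eq_singleton_iff_unique_mem.2 ⟨hw, fun x hx => Finset.card_le_one.1 hW x hx w hw⟩,
    Finset.coe_singleton, union_singleton]
  have hsub : colourSet Δ (insert w M) ⊆ insert (edgeCol Δ w m) {γ} :=
    (colourSet_insert_subset fun m' hm' _ => hconst w hw m' hm' m hm).trans
      (insert_subset_insert hγ)
  simpa using (ncard_le_ncard hsub).trans (ncard_insert_le _ _)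

theorem exists_mem_FSet_lt_le_two_mul (hΔ : IsColouring Δ k) {b : ℕ} (hb : b ∈ FSet Δ k)
    (hb2 : 2 ≤ b) : ∃ s ∈ FSet Δ k, s < b ∧ b ≤ 2 * s := by
  obtain ⟨-, X, hX, rfl⟩ := hb
  set T := colourSet Δ X
  have hT : T.Finite := colourSet_finite hΔ X
  obtain ⟨M, hMX, hM, ⟨γ, hγ⟩, W, hWX, hconst, hMW⟩ :=
    exists_monochromatic_union_finset_colourSet_eq hX hT
  obtain ⟨W', -, ⟨hW'W, hW'T⟩, hmin⟩ := exists_minimal_le_of_wellFoundedLT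
    (fun W' : Finset ℕ => W' ⊆ W ∧ colourSet Δ (M ∪ W') = T) W ⟨subset_rfl, hMW⟩
  have hdrop : ∀ w ∈ W', (colourSet Δ (M ∪ ↑(W'.erase w))).ncard < T.ncard := by
    intro w hw
    have hsub : W'.erase w ⊆ W := (W'.erase_subset w).trans hW'W
    have hle : colourSet Δ (M ∪ ↑(W'.erase w)) ⊆ T :=
      colourSet_mono (union_subset hMX ((Finset.coe_subset.2 hsub).trans hWX))
    refine ncard_lt_ncard (ssubset_of_subset_of_ne hle fun h => ?_) hT
    exact (Finset.erase_ssubset hw).not_subset (hmin ⟨hsub, h⟩ (W'.erase_subset w))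
  rcases Nat.lt_or_ge 1 W'.card with hcard | hcard
  · obtain ⟨w₁, hw₁, w₂, hw₂, hne⟩ := Finset.one_lt_card.1 hcard
    have hle := hW'T ▸ ncard_colourSet_union_le_add (colourSet_nonempty hM) (hW'T ▸ hT) hne
    obtain ⟨w, hw, hbw⟩ : ∃ w ∈ W', T.ncard ≤ 2 * (colourSet Δ (M ∪ ↑(W'.erase w))).ncard := by
      rcases le_total (colourSet Δ (M ∪ ↑(W'.erase w₁))).ncard
        (colourSet Δ (M ∪ ↑(W'.erase w₂))).ncard with h | h
      exacts [⟨w₂, hw₂, by omega⟩, ⟨w₁, hw₁, by omega⟩]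
    exact ⟨_, ncard_colourSet_mem_FSet hΔ (hM.mono subset_union_left), hdrop w hw, hbw⟩
  · have hT2 := hW'T ▸ ncard_colourSet_union_le_two hM.nonempty hγ hcard
      fun w hw => hconst w (hW'W hw)
    have hM1 : (colourSet Δ M).ncard = 1 := by
      rw [(colourSet_nonempty hM).subset_singleton_iff.1 hγ, ncard_singleton]
    exact ⟨_, ncard_colourSet_mem_FSet hΔ hM, by omega, by omega⟩

theorem isColouring_min_sub (hk : 1 ≤ k) : IsColouring (fun a b => min (b - a) k) k := by
  refine ⟨fun x y hxy => ?_, fun c hc => ⟨0, c, ?_, ?_⟩⟩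
  · simp only [edgeCol, Finset.mem_Icc]
    omega
  all_goals simp only [edgeCol, Finset.mem_Icc] at hc ⊢; omega

theorem le_two_pow_ncard_FSet_sub_one (hΔ : IsColouring Δ k) :
    k ≤ 2 ^ ((FSet Δ k).ncard - 1) :=
  le_two_pow_ncard_sub_one FSet_finite
    (fun _ hb hb2 => exists_mem_FSet_lt_le_two_mul hΔ hb hb2) (self_mem_FSet hΔ)

/-- For every `k ≥ 2` and every surjective colouring `Δ : ℕ^(2) ↠ [k]` one has
`|F_Δ| ≥ 1 + log₂ k`, in the equivalent form `2 ^ (|F_Δ| - 1) ≥ k`; in particular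
`ψ(k) ≥ 1 + log₂ k`, i.e. `2 ^ (ψ(k) - 1) ≥ k`. -/
theorem FSet_log_lower_bound (k : ℕ) (hk : 2 ≤ k) :
    (∀ Δ : ℕ → ℕ → ℕ, IsColouring Δ k → k ≤ 2 ^ ((FSet Δ k).ncard - 1)) ∧
      k ≤ 2 ^ (psi k - 1) := by
  refine ⟨fun Δ hΔ => le_two_pow_ncard_FSet_sub_one hΔ, ?_⟩
  obtain ⟨Δ, hΔ, hψ⟩ := Nat.sInf_mem
    (⟨_, _, isColouring_min_sub (by omega), rfl⟩ :
      {m | ∃ Δ : ℕ → ℕ → ℕ, IsColouring Δ k ∧ (FSet Δ k).ncard = m}.Nonempty)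
  rw [psi, ← hψ]
  exact le_two_pow_ncard_FSet_sub_one hΔ
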